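/- Let (N, ρ) be a doubling metric space with doubling constant λ > 1. Then N has Nagata dimension at most λ^3 − 1 with constant 2: for every s > 0 there is a cover C of N by sets of diameter at most 2s such that every subset A ⊆ N with diam A ≤ s meets at most λ^3 members of C. -/
import Mathlib

/-- `N` has Nagata dimension at most `d` with constant `γ`. -/
def HasNagataDim (N : Type*) [MetricSpace N] (d : ℕ) (γ : ℝ) : Prop :=
  ∀ s : ℝ, 0 < s → ∃ 𝒞 : Set (Set N),
    (∀ C ∈ 𝒞, C.Nonempty) ∧
    (⋃₀ 𝒞 = Set.univ) ∧
    (∀ C ∈ 𝒞, EMetric.diam C ≤ ENNReal.ofReal (γ * s)) ∧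
    (∀ A : Set N, EMetric.diam A ≤ ENNReal.ofReal s →
      {C ∈ 𝒞 | (C ∩ A).Nonempty}.Finite ∧
      {C ∈ 𝒞 | (C ∩ A).Nonempty}.ncard ≤ d + 1)

theorem stmt_6 (N : Type*) [MetricSpace N] (lam : ℕ) (hlam : 1 < lam)
    (hdoub : ∀ (x : N) (r : ℝ), 0 < r → ∃ F : Finset N, F.card ≤ lam ∧
      Metric.closedBall x (2 * r) ⊆ ⋃ c ∈ F, Metric.closedBall c r) :
    HasNagataDim N (lam ^ 3 - 1) 2 := by
  classical
  intro s hs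
  -- maximal s-separated set
  set Sep : Set (Set N) := {X | X.Pairwise (fun x y => s < dist x y)} with hSep
  obtain ⟨X, hXmax⟩ : ∃ m, Maximal (· ∈ Sep) m := by
    apply zorn_subset
    intro c hcS hchain
    refine ⟨⋃₀ c, ?_, fun t ht => Set.subset_sUnion_of_mem ht⟩
    intro x hx y hy hxy
    obtain ⟨tx, htx, hxtx⟩ := hx
    obtain ⟨ty, hty, hyty⟩ := hy
    rcases hchain.total htx hty with h | h
    · exact hcS hty (h hxtx) hyty hxy
    · exact hcS htx hxtx (h hyty) hxy
  have hXsep : X.Pairwise (fun x y => s < dist x y) := hXmax.1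
  refine ⟨(fun x => Metric.closedBall x s) '' X, ?_, ?_, ?_, ?_⟩
  · rintro C ⟨x, hx, rfl⟩
    exact ⟨x, Metric.mem_closedBall_self hs.le⟩
  · -- cover
    ext p
    simp only [Set.mem_sUnion, Set.mem_univ, iff_true]
    by_cases hp : p ∈ X
    · exact ⟨_, ⟨p, hp, rfl⟩, Metric.mem_closedBall_self hs.le⟩
    · by_contra hcon
      push_neg at hcon
      have key : ∀ y ∈ X, s < dist p y := by
        intro y hy
        have : p ∉ Metric.closedBall y s := fun h => hcon _ ⟨y, hy, rfl⟩ h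
        simpa [Metric.mem_closedBall, not_le] using this
      have hins : insert p X ∈ Sep := by
        intro x hx y hy hxy
        rcases Set.mem_insert_iff.mp hx with hx' | hx'
        · rcases Set.mem_insert_iff.mp hy with hy' | hy'
          · exact absurd (hx'.trans hy'.symm) hxy
          · rw [hx']; exact key y hy'
        · rcases Set.mem_insert_iff.mp hy with hy' | hy'
          · rw [hy', dist_comm]; exact key x hx'
          · exact hXsep hx' hy' hxy
      have := hXmax.2 hins (Set.subset_insert p X)
      exact hp (this (Set.mem_insert p X))
  · -- diameter
    rintro C ⟨x, hx, rfl⟩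
    apply EMetric.diam_le
    intro a ha b hb
    rw [edist_le_ofReal (by linarith)]
    calc dist a b ≤ dist a x + dist x b := dist_triangle _ _ _
      _ ≤ s + s := add_le_add (Metric.mem_closedBall.mp ha)
          (by rw [dist_comm]; exact Metric.mem_closedBall.mp hb)
      _ = 2 * s := by ring
  · -- multiplicity
    intro A hA
    set S := {C ∈ (fun x => Metric.closedBall x s) '' X | (C ∩ A).Nonempty} with hSdef
    rcases A.eq_empty_or_nonempty with rfl | ⟨a₀, ha₀⟩
    · have : S = ∅ := by
        ext C; simp [hSdef]
      rw [this]
      simp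
    -- all relevant centers are in closedBall a₀ (2*s)
    set T : Set N := {x ∈ X | (Metric.closedBall x s ∩ A).Nonempty} with hTdef
    have hTsub : T ⊆ Metric.closedBall a₀ (2 * s) := by
      rintro x ⟨hxX, a, hax, haA⟩
      have h1 : dist a x ≤ s := Metric.mem_closedBall.mp hax
      have h2 : dist a a₀ ≤ s := by
        rw [← edist_le_ofReal hs.le]
        exact le_trans (EMetric.edist_le_diam_of_mem haA ha₀) hA
      rw [Metric.mem_closedBall]
      calc dist x a₀ ≤ dist x a + dist a a₀ := dist_triangle _ _ _
        _ ≤ s + s := add_le_add (by rwa [dist_comm]) h2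
        _ = 2 * s := by ring
    -- triple doubling: cover closedBall a₀ (2s) by lam^3 balls of radius s/4
    obtain ⟨F1, hF1c, hF1⟩ := hdoub a₀ s hs
    choose F2 hF2c hF2 using fun c => hdoub c (s / 2) (by linarith)
    choose F3 hF3c hF3 using fun c => hdoub c (s / 4) (by linarith)
    set G : Finset N := F1.biUnion (fun c => (F2 c).biUnion (fun c' => F3 c')) with hGdef
    have hGc : G.card ≤ lam ^ 3 := by
      calc G.card ≤ F1.card * (lam * lam) := by
            apply Finset.card_biUnion_le_card_mul
            intro c _
            exact Finset.card_biUnion_le_card_mul _ _ _ (fun c' _ =>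
              (hF3c c').trans (le_refl _)) |>.trans
              (Nat.mul_le_mul (hF2c c) le_rfl)
        _ ≤ lam * (lam * lam) := Nat.mul_le_mul hF1c le_rfl
        _ = lam ^ 3 := by ring
    have hGcov : Metric.closedBall a₀ (2 * s) ⊆ ⋃ g ∈ G, Metric.closedBall g (s / 4) := by
      intro x hx
      obtain ⟨c1, hc1, hx1⟩ := Set.mem_iUnion₂.mp (hF1 hx)
      have hx1' : x ∈ Metric.closedBall c1 (2 * (s / 2)) := by
        rwa [show (2 : ℝ) * (s / 2) = s by ring]
      obtain ⟨c2, hc2, hx2⟩ := Set.mem_iUnion₂.mp (hF2 c1 hx1')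
      have hx2' : x ∈ Metric.closedBall c2 (2 * (s / 4)) := by
        rwa [show (2 : ℝ) * (s / 4) = s / 2 by ring]
      obtain ⟨c3, hc3, hx3⟩ := Set.mem_iUnion₂.mp (hF3 c2 hx2')
      exact Set.mem_iUnion₂.mpr ⟨c3, Finset.mem_biUnion.mpr
        ⟨c1, hc1, Finset.mem_biUnion.mpr ⟨c2, hc2, hc3⟩⟩, hx3⟩
    -- each ball of radius s/4 contains at most one point of T
    have hchoice : ∀ x ∈ T, ∃ g ∈ G, x ∈ Metric.closedBall g (s / 4) := by
      intro x hx
      obtain ⟨g, hg, hxg⟩ := Set.mem_iUnion₂.mp (hGcov (hTsub hx))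
      exact ⟨g, hg, hxg⟩
    choose! f hfG hfball using hchoice
    have hfinj : Set.InjOn f T := by
      intro x hx y hy hfxy
      by_contra hne
      have hd : s < dist x y := hXsep hx.1 hy.1 hne
      have : dist x y ≤ s / 4 + s / 4 := by
        calc dist x y ≤ dist x (f x) + dist (f x) y := dist_triangle _ _ _
          _ ≤ s / 4 + s / 4 := add_le_add (Metric.mem_closedBall.mp (hfball x hx))
              (by rw [hfxy, dist_comm]; exact Metric.mem_closedBall.mp (hfball y hy))
      linarith
    have hfim : f '' T ⊆ (G : Set N) := by
      rintro _ ⟨x, hx, rfl⟩; exact hfG x hx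
    have hTfin : T.Finite :=
      Set.Finite.of_finite_image ((G.finite_toSet).subset hfim) hfinj
    have hTcard : T.ncard ≤ lam ^ 3 := by
      have h1 : T.ncard = (f '' T).ncard := (Set.ncard_image_of_injOn hfinj).symm
      have h2 : (f '' T).ncard ≤ (G : Set N).ncard :=
        Set.ncard_le_ncard hfim (G.finite_toSet)
      rw [h1]
      exact h2.trans (by simpa [Set.ncard_coe_finset] using hGc)
    -- conclude
    have hSsub : S ⊆ (fun x => Metric.closedBall x s) '' T := by
      rintro C ⟨⟨x, hxX, rfl⟩, hCA⟩
      exact ⟨x, ⟨hxX, hCA⟩, rfl⟩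
    have hSfin : S.Finite := (hTfin.image _).subset hSsub
    refine ⟨hSfin, ?_⟩
    have : S.ncard ≤ T.ncard :=
      le_trans (Set.ncard_le_ncard hSsub (hTfin.image _)) (Set.ncard_image_le hTfin)
    have hpow : 1 ≤ lam ^ 3 := Nat.one_le_pow _ _ (by omega)
    omega
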